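/- Let κ be regular uncountable, E ⊆ κ, and let P[E] be the forcing whose conditions are closed bounded subsets of E ordered by end-extension. If E is fat (for every δ < κ and club C ⊆ κ there is a closed s ⊆ C ∩ E of order type δ), then for every δ < κ the set of conditions of order type ≥ δ is dense in P[E]. -/

import Mathlib

/-- `C` is a closed unbounded (club) subset of the ordinal `κ`. -/
def IsClubIn (C : Set Ordinal) (κ : Ordinal) : Prop :=
  C ⊆ Set.Iio κ ∧
  (∀ t ⊆ C, t.Nonempty → sSup t < κ → sSup t ∈ C) ∧
  ∀ α < κ, ∃ β ∈ C, α < β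

/-- `s` is closed (below its supremum). -/
def IsClosedSubSup (s : Set Ordinal) : Prop :=
  ∀ t ⊆ s, t.Nonempty → sSup t < sSup s → sSup t ∈ s

/-- `E` is fat in `κ`: for every `δ < κ` and club `C ⊆ κ` there is a closed
`s ⊆ C ∩ E` of order type `δ`. -/
def IsFatIn (E : Set Ordinal) (κ : Ordinal) : Prop :=
  ∀ δ < κ, ∀ C, IsClubIn C κ →
    ∃ s, s ⊆ C ∩ E ∧ IsClosedSubSup s ∧ Nonempty (↥(Set.Iio δ) ≃o ↥s)

/-- A condition of the club-shooting forcing `P[E]`: a closed bounded subset of `E`. -/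
def IsCondition (E : Set Ordinal) (κ : Ordinal) (d : Set Ordinal) : Prop :=
  d ⊆ E ∧ (∀ t ⊆ d, t.Nonempty → sSup t ∈ d) ∧ sSup d < κ

/-- `d'` end-extends `d`. -/
def EndExt (d d' : Set Ordinal) : Prop :=
  d ⊆ d' ∧ ∀ x ∈ d', x ∉ d → ∀ y ∈ d, y < x

/-
Let `d` be a condition and `δ < κ`. The interval `(sup d, κ)` is a club, so fatness yields a
closed `s ⊆ E` above `sup d` of order type `δ + 1`. Having a largest element, `s` is closed under
all suprema, and so is `d ∪ s`; it is bounded in `κ` by the top of `s`, end-extends `d`, and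
contains a copy of `δ`.
-/

def IsSSupClosed {α : Type*} [SupSet α] (s : Set α) : Prop :=
  ∀ t ⊆ s, t.Nonempty → sSup t ∈ s

theorem IsSSupClosed.union {α : Type*} [ConditionallyCompleteLattice α] {d s : Set α}
    (hd : IsSSupClosed d) (hs : IsSSupClosed s) (hd_bdd : BddAbove d) (hs_bdd : BddAbove s)
    (hds : ∀ x ∈ d, ∀ y ∈ s, x ≤ y) : IsSSupClosed (d ∪ s) := by
  intro t ht ht_ne
  rcases (t ∩ s).eq_empty_or_nonempty with hts | ⟨a, hat, has⟩
  · have htd : t ⊆ d := fun x hx =>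
      (ht hx).resolve_right fun hxs => hts.subset ⟨hx, hxs⟩
    exact Or.inl (hd t htd ht_ne)
  have hts_bdd : BddAbove (t ∩ s) := hs_bdd.mono Set.inter_subset_right
  have hsup_eq : sSup t = sSup (t ∩ s) := by
    refine le_antisymm (csSup_le ht_ne fun x hx => ?_)
      (csSup_le_csSup ((hd_bdd.union hs_bdd).mono ht) ⟨a, hat, has⟩ Set.inter_subset_left)
    rcases ht hx with hxd | hxs
    · exact (hds x hxd a has).trans (le_csSup hts_bdd ⟨hat, has⟩)
    · exact le_csSup hts_bdd ⟨hx, hxs⟩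
  rw [hsup_eq]
  exact Or.inr (hs _ Set.inter_subset_right ⟨a, hat, has⟩)

theorem IsClosedSubSup.isSSupClosed {s : Set Ordinal} {m : Ordinal} (hs : IsClosedSubSup s)
    (hm : IsGreatest s m) : IsSSupClosed s := by
  intro t ht ht_ne
  rcases (csSup_le_csSup hm.bddAbove ht_ne ht).lt_or_eq with hlt | heq
  · exact hs t ht ht_ne hlt
  · exact heq ▸ hm.csSup_mem

theorem isGreatest_of_orderIso_Iio_succ {s : Set Ordinal} {δ : Ordinal}
    (e : Set.Iio (Order.succ δ) ≃o s) : IsGreatest s (e ⟨δ, Order.lt_succ δ⟩) := by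
  refine ⟨(e _).2, fun x hx => ?_⟩
  have hle : e.symm ⟨x, hx⟩ ≤ ⟨δ, Order.lt_succ δ⟩ :=
    Subtype.coe_le_coe.mp (Order.le_of_lt_succ (e.symm ⟨x, hx⟩).2)
  exact Subtype.coe_le_coe.mpr (e.symm_apply_le.mp hle)

theorem isClubIn_Ioo {α κ : Ordinal} (hκ : Order.IsSuccLimit κ) (hα : α < κ) :
    IsClubIn (Set.Ioo α κ) κ := by
  refine ⟨fun x hx => hx.2, fun t ht ⟨a, ha⟩ hlt => ?_, fun β hβ => ?_⟩
  · exact ⟨(ht ha).1.trans_le (le_csSup ⟨κ, fun x hx => (ht hx).2.le⟩ ha), hlt⟩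
  · refine ⟨Order.succ (max α β), ⟨?_, hκ.succ_lt (max_lt hα hβ)⟩, ?_⟩
    · exact (le_max_left α β).trans_lt (Order.lt_succ _)
    · exact (le_max_right α β).trans_lt (Order.lt_succ _)

def orderEmbeddingOfSubset {α : Type*} [Preorder α] {s t : Set α} (h : s ⊆ t) : s ↪o t :=
  ⟨⟨Set.inclusion h, Set.inclusion_injective h⟩, Iff.rfl⟩

theorem endExt_union {d s : Set Ordinal} (hd : BddAbove d) (hs : s ⊆ Set.Ioi (sSup d)) :
    EndExt d (d ∪ s) := by
  refine ⟨Set.subset_union_left, fun x hx hxd y hy => ?_⟩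
  exact (le_csSup hd hy).trans_lt (hs (hx.resolve_left hxd))

theorem IsCondition.union_of_isGreatest {E d s : Set Ordinal} {κ m : Ordinal}
    (hd : IsCondition E κ d) (hd_bdd : BddAbove d) (hsE : s ⊆ E) (hs_gt : s ⊆ Set.Ioi (sSup d))
    (hs : IsClosedSubSup s) (hm : IsGreatest s m) (hmκ : m < κ) :
    IsCondition E κ (d ∪ s) ∧ EndExt d (d ∪ s) := by
  obtain ⟨hdE, hd_closed, -⟩ := hd
  have hds : ∀ x ∈ d, ∀ y ∈ s, x ≤ y := fun x hx y hy => (le_csSup hd_bdd hx).trans (hs_gt hy).le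
  have hm_union : IsGreatest (d ∪ s) m :=
    ⟨Or.inr hm.1, fun x hx => hx.elim (fun hxd => hds x hxd m hm.1) (hm.2 ·)⟩
  refine ⟨⟨Set.union_subset hdE hsE, ?_, hm_union.csSup_eq ▸ hmκ⟩, endExt_union hd_bdd hs_gt⟩
  exact IsSSupClosed.union hd_closed (hs.isSSupClosed hm) hd_bdd hm.bddAbove hds

theorem stmt8_general (κ : Cardinal) (hunc : Cardinal.aleph0 < κ)
    (E : Set Ordinal) (hE : E ⊆ Set.Iio κ.ord)
    (hfat : IsFatIn E κ.ord) :
    ∀ δ < κ.ord, ∀ d, IsCondition E κ.ord d →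
      ∃ d', IsCondition E κ.ord d' ∧ EndExt d d' ∧
        Nonempty (↥(Set.Iio δ) ↪o ↥d') := by
  intro δ hδ d hd
  have hκ : Order.IsSuccLimit κ.ord := Cardinal.isSuccLimit_ord hunc.le
  -- `sSup d < κ.ord` is no bound by itself: `sSup` of an unbounded set is junk.
  have hd_bdd : BddAbove d := ⟨κ.ord, fun x hx => (hE (hd.1 hx)).le⟩
  obtain ⟨s, hsCE, hs, ⟨e⟩⟩ :=
    hfat (Order.succ δ) (hκ.succ_lt hδ) _ (isClubIn_Ioo hκ hd.2.2)
  have hm := isGreatest_of_orderIso_Iio_succ e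
  obtain ⟨hd', hext⟩ := hd.union_of_isGreatest hd_bdd (fun x hx => (hsCE hx).2)
    (fun x hx => (hsCE hx).1.1) hs hm (hsCE hm.1).1.2
  refine ⟨d ∪ s, hd', hext, ⟨?_⟩⟩
  exact (orderEmbeddingOfSubset (Set.Iio_subset_Iio (Order.le_succ δ))).trans
    (e.toOrderEmbedding.trans (orderEmbeddingOfSubset Set.subset_union_right))

/-- If `E` is fat then for every `δ < κ` the conditions of order type `≥ δ`
are dense in `P[E]`. -/
theorem stmt8 (κ : Cardinal) (hreg : κ.IsRegular) (hunc : Cardinal.aleph0 < κ)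
    (E : Set Ordinal) (hE : E ⊆ Set.Iio κ.ord)
    (hfat : IsFatIn E κ.ord) :
    ∀ δ < κ.ord, ∀ d, IsCondition E κ.ord d →
      ∃ d', IsCondition E κ.ord d' ∧ EndExt d d' ∧
        Nonempty (↥(Set.Iio δ) ↪o ↥d') :=
  stmt8_general κ hunc E hE hfat
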